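/- n-equivalent words satisfy the same existential first-order sentences with at most n quantifiers: let u : α → Σ and v : β → Σ be words over linear orders with u ∼ₙ v. Then for every quantifier-free bounded formula φ : L_Σ.BoundedFormula Empty n (φ.IsQF), the L_Σ-structure of u satisfies the existential closure φ.exs if and only if the L_Σ-structure of v does. -/

import Mathlib

open FirstOrder

/-- A finite word `s : List A` is a subword of a word `w : α → A` over a linear order `α`
if there is a strictly monotone map `g` from `Fin s.length` to `α` picking out `s`. -/
def IsSubword {A : Type} {α : Type} [LinearOrder α] (s : List A) (w : α → A) : Prop :=
  ∃ g : Fin s.length → α, StrictMono g ∧ ∀ i, w (g i) = s.get i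

/-- Two words (over possibly different linear orders) are `n`-equivalent if they have
exactly the same subwords of length at most `n`. -/
def NEquiv {A : Type} (n : ℕ) {α : Type} {β : Type} [LinearOrder α] [LinearOrder β]
    (u : α → A) (v : β → A) : Prop :=
  ∀ s : List A, s.length ≤ n → (IsSubword s u ↔ IsSubword s v)

/-- The first-order language of words over the alphabet `A`: one binary relation `<`
and a unary relation `P_a` for each letter `a : A`. -/
def wordLang (A : Type) : Language where
  Functions := fun _ => Empty
  Relations := fun n =>
    match n with
    | 1 => A
    | 2 => PUnit
    | _ => Empty

/-- A word `w : α → A` as a structure for `wordLang A`, with universe `α`: `<` is the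
order of `α` and `P_a` holds of the positions labelled `a`. -/
def wordStructure {A : Type} {α : Type} [LinearOrder α] (w : α → A) :
    (wordLang A).Structure α where
  funMap := fun {n} f _ => Empty.elim f
  RelMap := fun {n} r x =>
    match n, r, x with
    | 0, r, _ => Empty.elim r
    | 1, a, x => w (x 0) = a
    | 2, _, x => x 0 < x 1
    | (_ + 3), r, _ => Empty.elim r

/-- The word `w` satisfies the sentence `φ` of `wordLang A`. -/
def RealizesSentence {A : Type} {α : Type} [LinearOrder α] (w : α → A)
    (φ : (wordLang A).Sentence) : Prop :=
  letI := wordStructure w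
  φ.Realize α

lemma NEquiv.symm {A : Type} {n : ℕ} {α β : Type} [LinearOrder α] [LinearOrder β]
    {u : α → A} {v : β → A} (h : NEquiv n u v) : NEquiv n v u :=
  fun s hs => (h s hs).symm

lemma isSubword_ofFn_iff {A α : Type} [LinearOrder α] {k : ℕ} (f : Fin k → A) (w : α → A) :
    IsSubword (List.ofFn f) w ↔ ∃ g : Fin k → α, StrictMono g ∧ w ∘ g = f := by
  have hlen : (List.ofFn f).length = k := List.length_ofFn
  constructor
  · rintro ⟨g, hg, hgw⟩
    refine ⟨g ∘ Fin.cast hlen.symm, hg.comp (Fin.cast_strictMono _), funext fun i => ?_⟩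
    simp [hgw]
  · rintro ⟨g, hg, rfl⟩
    exact ⟨g ∘ Fin.cast hlen, hg.comp (Fin.cast_strictMono _), fun i => by simp; rfl⟩

lemma exists_strictMono_comp_eq {α ι : Type} [LinearOrder α] [Fintype ι] (x : ι → α) :
    ∃ k ≤ Fintype.card ι, ∃ e : Fin k → α, StrictMono e ∧ ∃ idx : ι → Fin k, e ∘ idx = x := by
  classical
  set F := Finset.univ.image x
  have hx : ∀ i, ∃ j, F.orderEmbOfFin rfl j = x i := fun i => by
    rw [← Set.mem_range, Finset.range_orderEmbOfFin]
    exact Finset.mem_image_of_mem x (Finset.mem_univ i)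
  choose idx hidx using hx
  exact ⟨F.card, Finset.card_image_le, _, (F.orderEmbOfFin rfl).strictMono, idx, funext hidx⟩

namespace wordLang

lemma exists_eq_var_inr {A γ : Type} (t : (wordLang A).Term (Empty ⊕ γ)) :
    ∃ i, t = Language.Term.var (Sum.inr i) := by
  rcases t with (⟨⟨⟩⟩ | i) | ⟨⟨⟩, _⟩
  exact ⟨i, rfl⟩

lemma realize_iff_of_isQF {A α β : Type} [LinearOrder α] [LinearOrder β]
    {u : α → A} {v : β → A} {n : ℕ} {x : Fin n → α} {y : Fin n → β}
    (hlt : ∀ i j, x i < x j ↔ y i < y j) (hlabel : u ∘ x = v ∘ y)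
    {φ : (wordLang A).BoundedFormula Empty n} (hφ : φ.IsQF) (e₁ : Empty → α) (e₂ : Empty → β) :
    (letI := wordStructure u; φ.Realize e₁ x) ↔ (letI := wordStructure v; φ.Realize e₂ y) := by
  let := wordStructure u
  let := wordStructure v
  induction hφ with
  | falsum => exact Iff.rfl
  | imp _ _ ih₁ ih₂ => exact imp_congr ih₁ ih₂
  | of_isAtomic hA =>
    cases hA with
    | equal t₁ t₂ =>
      obtain ⟨i, rfl⟩ := exists_eq_var_inr t₁
      obtain ⟨j, rfl⟩ := exists_eq_var_inr t₂
      show x i = x j ↔ y i = y j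
      simp only [le_antisymm_iff, ← not_lt, hlt]
    | @rel l R ts =>
      match l, R with
      | 1, a =>
        obtain ⟨i, hi⟩ := exists_eq_var_inr (ts 0)
        show u ((ts 0).realize (Sum.elim e₁ x)) = a ↔ v ((ts 0).realize (Sum.elim e₂ y)) = a
        rw [hi]
        exact Eq.congr_left (congrFun hlabel i)
      | 2, _ =>
        obtain ⟨i, hi⟩ := exists_eq_var_inr (ts 0)
        obtain ⟨j, hj⟩ := exists_eq_var_inr (ts 1)
        show (ts 0).realize (Sum.elim e₁ x) < (ts 1).realize (Sum.elim e₁ x) ↔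
          (ts 0).realize (Sum.elim e₂ y) < (ts 1).realize (Sum.elim e₂ y)
        rw [hi, hj]
        exact hlt i j
      | 0, R | _ + 3, R => exact R.elim

end wordLang

/-- A witness tuple in `u`, read off in increasing order, is a subword of length at most `n`;
an occurrence of that subword in `v` is a witness tuple in `v` with the same order type and labels. -/
lemma NEquiv.realize_exs {A : Type} {n : ℕ} {α β : Type} [LinearOrder α] [LinearOrder β]
    {u : α → A} {v : β → A} (h : NEquiv n u v)
    {φ : (wordLang A).BoundedFormula Empty n} (hφ : φ.IsQF)
    (hu : RealizesSentence u φ.exs) : RealizesSentence v φ.exs := by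
  let := wordStructure u
  let := wordStructure v
  simp only [RealizesSentence, Language.Sentence.Realize,
    Language.BoundedFormula.realize_exs] at hu ⊢
  obtain ⟨x, hx⟩ := hu
  obtain ⟨k, hk, e, he, idx, rfl⟩ := exists_strictMono_comp_eq x
  have hsub : IsSubword (List.ofFn (u ∘ e)) u := (isSubword_ofFn_iff _ u).2 ⟨e, he, rfl⟩
  obtain ⟨g, hg, hgv⟩ :=
    (isSubword_ofFn_iff _ v).1 ((h _ (by simpa using hk)).1 hsub)
  refine ⟨g ∘ idx, (wordLang.realize_iff_of_isQF (fun i j => ?_) ?_ hφ _ _).1 hx⟩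
  · exact he.lt_iff_lt.trans hg.lt_iff_lt.symm
  · exact congrArg (· ∘ idx) hgv.symm

theorem nequiv_realize_exs_general {A : Type} (n : ℕ)
    {α β : Type} [LinearOrder α] [LinearOrder β]
    (u : α → A) (v : β → A) (h : NEquiv n u v)
    (φ : (wordLang A).BoundedFormula Empty n) (hφ : φ.IsQF) :
    RealizesSentence u φ.exs ↔ RealizesSentence v φ.exs :=
  ⟨h.realize_exs hφ, h.symm.realize_exs hφ⟩

/-- `n`-equivalent words satisfy the same existential closures of quantifier-free
formulas with `n` quantified variables. -/
theorem nequiv_realize_exs {A : Type} [Finite A] [Nonempty A] (n : ℕ)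
    {α β : Type} [LinearOrder α] [LinearOrder β]
    (u : α → A) (v : β → A) (h : NEquiv n u v)
    (φ : (wordLang A).BoundedFormula Empty n) (hφ : φ.IsQF) :
    RealizesSentence u φ.exs ↔ RealizesSentence v φ.exs :=
  nequiv_realize_exs_general n u v h φ hφ
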